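/- arXiv:math/0501454 — 3 statements merged into one kernel-verified Lean document; each statement's English description precedes it below -/
import Mathlib

section
/- Let n ≥ 1 and let P, Q ∈ ℂ[x,y] be homogeneous of degrees 4n and 6n respectively, with 4P³ + 27Q² not identically zero. Then the rational function j = 1728·4P³/(4P³ + 27Q²) on P¹ is constant if and only if P_x·Q_y − P_y·Q_x = 0 identically. -/
/-!
If `j` is constant then `a P³ = b Q²` for some `(a, b) ≠ (0, 0)`; differentiating this
gives `P² (P_x Q_y − P_y Q_x) = 0`. Conversely, Euler's relations `x P_x + y P_y = 4n P` and
`x Q_x + y Q_y = 6n Q` combine to `y (P_x Q_y − P_y Q_x) = 2n (3 Q P_x − 2 P Q_x)`, so a vanishing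
Jacobian makes `P³` and `Q²` have proportional `x`-derivatives. On the affine chart `y = 1` this
is the vanishing of the Wronskian of two polynomials in one variable, which forces them to be
proportional; since `P³` and `Q²` are homogeneous of the same degree, `P³ = γ Q²` and `j` is
constant.
-/

namespace Polynomial

theorem exists_eq_C_mul_of_wronskian_eq_zero {K : Type*} [Field K] [CharZero K] {f g : K[X]}
    (hg : g ≠ 0) (hw : wronskian f g = 0) : ∃ c : K, f = C c * g := by
  classical
  set d := gcd f g
  have hd : d ≠ 0 := gcd_ne_zero_of_right hg
  have hcop : IsCoprime (f / d) (g / d) := isCoprime_div_gcd_div_gcd hg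
  have hf : f = d * (f / d) := (EuclideanDomain.mul_div_cancel' hd (gcd_dvd_left f g)).symm
  have hg' : g = d * (g / d) := (EuclideanDomain.mul_div_cancel' hd (gcd_dvd_right f g)).symm
  clear_value d
  generalize f / d = f₁ at hf hcop
  generalize g / d = g₁ at hg' hcop
  subst hf hg'
  have hw₁ : wronskian f₁ g₁ = 0 := by
    have : d * d * wronskian f₁ g₁ = 0 := by
      rw [← hw]
      simp only [wronskian, derivative_mul]
      ring
    simpa [hd] using this
  obtain ⟨hf₁, hg₁⟩ := hcop.wronskian_eq_zero_iff.mp hw₁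
  rw [eq_C_of_derivative_eq_zero hg₁] at hg ⊢
  rw [eq_C_of_derivative_eq_zero hf₁]
  have hb : g₁.coeff 0 ≠ 0 := by
    rintro hb
    rw [hb, C_0, mul_zero] at hg
    exact hg rfl
  refine ⟨f₁.coeff 0 / g₁.coeff 0, ?_⟩
  rw [← mul_assoc, mul_comm (C _) d, mul_assoc, ← C_mul, div_mul_cancel₀ _ hb]

end Polynomial

namespace MvPolynomial

section Dehomogenize

variable {R : Type*} [CommSemiring R]

variable (R) in
noncomputable abbrev dehomogenize : MvPolynomial (Fin 2) R →ₐ[R] Polynomial R :=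
  aeval ![Polynomial.X, 1]

theorem derivative_dehomogenize (f : MvPolynomial (Fin 2) R) :
    Polynomial.derivative (dehomogenize R f) = dehomogenize R (pderiv 0 f) := by
  induction f using MvPolynomial.induction_on with
  | C a => simp
  | add p q hp hq => simp [hp, hq]
  | mul_X p i hp => fin_cases i <;> simp [Polynomial.derivative_mul, hp, mul_comm]

theorem IsHomogeneous.eq_of_dehomogenize_eq {n : ℕ} {F G : MvPolynomial (Fin 2) R}
    (hF : F.IsHomogeneous n) (hG : G.IsHomogeneous n)
    (h : dehomogenize R F = dehomogenize R G) : F = G :=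
  (Polynomial.homogenize_eq_of_isHomogeneous hF h).symm.trans
    (Polynomial.homogenize_eq_of_isHomogeneous hG rfl)

end Dehomogenize

theorem IsHomogeneous.exists_eq_C_mul_of_pderiv_zero {K : Type*} [Field K] [CharZero K] {n : ℕ}
    {F G : MvPolynomial (Fin 2) K} (hF : F.IsHomogeneous n) (hG : G.IsHomogeneous n)
    (hG₀ : G ≠ 0) (h : pderiv 0 F * G = F * pderiv 0 G) : ∃ γ : K, F = C γ * G := by
  have hGdehom : dehomogenize K G ≠ 0 := fun h₀ =>
    hG₀ (hG.eq_of_dehomogenize_eq (isHomogeneous_zero _ _ n) (h₀.trans (map_zero _).symm))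
  obtain ⟨γ, hγ⟩ :=
    Polynomial.exists_eq_C_mul_of_wronskian_eq_zero (f := dehomogenize K F) hGdehom <| by
      rw [Polynomial.wronskian, derivative_dehomogenize, derivative_dehomogenize, ← map_mul,
        ← map_mul, h, sub_self]
  refine ⟨γ, hF.eq_of_dehomogenize_eq (zero_add n ▸ (isHomogeneous_C _ γ).mul hG) ?_⟩
  rw [hγ, map_mul, algHom_C, Polynomial.algebraMap_eq]

theorem X_one_mul_jacobian_eq {R : Type*} [CommRing R] {d e : ℕ}
    {P Q : MvPolynomial (Fin 2) R} (hP : P.IsHomogeneous d) (hQ : Q.IsHomogeneous e) :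
    X 1 * (pderiv 0 P * pderiv 1 Q - pderiv 1 P * pderiv 0 Q) =
      (e : MvPolynomial (Fin 2) R) * Q * pderiv 0 P -
        (d : MvPolynomial (Fin 2) R) * P * pderiv 0 Q := by
  have eulerP := hP.sum_X_mul_pderiv
  have eulerQ := hQ.sum_X_mul_pderiv
  rw [Fin.sum_univ_two, nsmul_eq_mul] at eulerP eulerQ
  linear_combination pderiv 0 P * eulerQ - pderiv 0 Q * eulerP

theorem jacobian_eq_zero_of_C_mul_pow_eq_C_mul_pow {σ R : Type*} [CommRing R] [IsDomain R]
    [CharZero R] {P Q : MvPolynomial σ R} {a b : R} {p q : ℕ} (hab : a ≠ 0 ∨ b ≠ 0) (hp : p ≠ 0)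
    (h : C a * P ^ p = C b * Q ^ q) (i j : σ) :
    pderiv i P * pderiv j Q - pderiv j P * pderiv i Q = 0 := by
  rcases eq_or_ne a 0 with rfl | ha
  · obtain ⟨rfl, -⟩ : Q = 0 ∧ q ≠ 0 := by
      simpa [hab.resolve_left (not_not_intro rfl)] using h.symm
    simp
  rcases eq_or_ne P 0 with rfl | hP
  · simp
  have hi := congrArg (pderiv i) h
  have hj := congrArg (pderiv j) h
  simp only [pderiv_C_mul, pderiv_pow] at hi hj
  have : C a * (p : MvPolynomial σ R) * P ^ (p - 1) *
      (pderiv i P * pderiv j Q - pderiv j P * pderiv i Q) = 0 := by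
    linear_combination pderiv j Q * hi - pderiv i Q * hj
  simpa [ha, hp, hP] using this

theorem exists_eq_C_mul_add_of_eq_C_mul {σ K : Type*} [Field K] {A B : MvPolynomial σ K}
    {γ a b : K} (h : A = C γ * B) (hne : C a * A + C b * B ≠ 0) :
    ∃ c : K, A = C c * (C a * A + C b * B) := by
  have hsum : C a * A + C b * B = C (a * γ + b) * B := by
    rw [h, map_add, map_mul]
    ring
  have hne' : a * γ + b ≠ 0 := by
    rintro h₀
    rw [hsum, h₀, C_0, zero_mul] at hne
    exact hne rfl
  refine ⟨γ / (a * γ + b), ?_⟩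
  rw [hsum, h, ← mul_assoc, ← C_mul, div_mul_cancel₀ _ hne']

end MvPolynomial

open MvPolynomial

/-- **Constancy of the `j`-invariant (Lemma `derlem`).**
Let `P, Q ∈ ℂ[x,y]` be homogeneous of degrees `4n` and `6n` with `4P³ + 27Q² ≠ 0`.
The rational function `j = 1728·4P³/(4P³ + 27Q²)` on `ℙ¹` is constant (i.e. there is
`c : ℂ` with `1728·4P³ = c·(4P³ + 27Q²)` as polynomials) if and only if
`P_x·Q_y − P_y·Q_x = 0` identically. -/
theorem stmt5 (n : ℕ) (hn : 1 ≤ n) (P Q : MvPolynomial (Fin 2) ℂ)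
    (hP : P.IsHomogeneous (4 * n)) (hQ : Q.IsHomogeneous (6 * n))
    (hΔ : C 4 * P ^ 3 + C 27 * Q ^ 2 ≠ 0) :
    (∃ c : ℂ, C 1728 * (C 4 * P ^ 3) = C c * (C 4 * P ^ 3 + C 27 * Q ^ 2)) ↔
      pderiv 0 P * pderiv 1 Q - pderiv 1 P * pderiv 0 Q = 0 := by
  constructor
  · rintro ⟨c, hc⟩
    refine jacobian_eq_zero_of_C_mul_pow_eq_C_mul_pow (a := (1728 - c) * 4) (b := 27 * c)
      (q := 2) ?_ three_ne_zero ?_ 0 1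
    · rcases eq_or_ne c 0 with rfl | hc₀
      · left; norm_num
      · right; simpa using hc₀
    · simp only [map_mul, map_sub]
      linear_combination hc
  · intro hJ
    have hPQ : 3 * Q * pderiv 0 P = 2 * P * pderiv 0 Q := by
      have h2n : (2 * n : MvPolynomial (Fin 2) ℂ) ≠ 0 := by
        exact_mod_cast (by omega : 2 * n ≠ 0)
      have euler := X_one_mul_jacobian_eq hP hQ
      rw [hJ, mul_zero] at euler
      push_cast at euler
      refine sub_eq_zero.mp ((mul_eq_zero.mp ?_).resolve_left h2n)
      linear_combination -euler
    rcases eq_or_ne Q 0 with rfl | hQ₀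
    · exact ⟨1728, by ring⟩
    have hP3 : (P ^ 3).IsHomogeneous (6 * n * 2) := by
      simpa only [show 4 * n * 3 = 6 * n * 2 by ring] using hP.pow 3
    obtain ⟨γ, hγ⟩ := hP3.exists_eq_C_mul_of_pderiv_zero (hQ.pow 2) (pow_ne_zero 2 hQ₀) <| by
      rw [pderiv_pow, pderiv_pow]
      linear_combination (P ^ 2 * Q) * hPQ
    obtain ⟨c, hc⟩ := exists_eq_C_mul_add_of_eq_C_mul hγ hΔ
    refine ⟨1728 * 4 * c, ?_⟩
    simp only [map_mul]
    linear_combination (C 1728 * C 4) * hc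
end

section
/- Let B = ℂ[x,y] and let M be a torsion-free graded B-module generated by its degree-0 part, with M eventually of rank 7 (i.e., dim_ℂ M_k = c + 7k for k ≫ 0 and some constant c). Then the successive differences d_k = dim M_{k+1} − dim M_k form a decreasing function of k ≥ 0, and d_k ≥ 7 for all k ≥ 0; consequently dim M_k ≥ dim M_0 + 7k for all k ≥ 0. -/
/-!
Write `x = X 0`, `y = X 1`. In each degree the Koszul complex of `(x, y)` gives maps
`M_k → M_{k+1}² → M_{k+2}`, `a ↦ (y a, -x a)` and `(a, b) ↦ x a + y b`, with composite zero.
The first is injective because `y` is a non-zero-divisor on `M`; the second is surjective because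
`M` is generated in degree `0` and every homogeneous polynomial of positive degree lies in
`(x, y)`. Hence `dim M_{k+2} + dim M_k ≤ 2 dim M_{k+1}`, i.e. the differences
`dim M_{k+1} - dim M_k` decrease; since they are eventually `7`, they are all at least `7`.
-/

open MvPolynomial

namespace MvPolynomial

variable (σ R : Type*) [CommSemiring R]

theorem homogeneousSubmodule_succ_le_iSup_map_mulLeft_X (n : ℕ) :
    homogeneousSubmodule σ R (n + 1) ≤
      ⨆ i, (homogeneousSubmodule σ R n).map (LinearMap.mulLeft R (X i)) := by
  rw [homogeneousSubmodule_eq_finsupp_supported, AddMonoidAlgebra.supported_eq_span_single,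
    Submodule.span_le]
  rintro _ ⟨d, hd, rfl⟩
  obtain ⟨i, hi⟩ : ∃ i, d i ≠ 0 := by
    by_contra! h
    simp [show d = 0 from Finsupp.ext h] at hd
  have hd' : Finsupp.single i 1 + (d - Finsupp.single i 1) = d :=
    add_tsub_cancel_of_le (Finsupp.single_le_iff.mpr (Nat.one_le_iff_ne_zero.mpr hi))
  refine Submodule.mem_iSup_of_mem i ⟨monomial (d - Finsupp.single i 1) 1, ?_, ?_⟩
  · apply isHomogeneous_monomial
    have := congrArg Finsupp.degree hd'
    simp only [map_add, Finsupp.degree_single] at this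
    simp only [Set.mem_ofPred_eq] at hd
    omega
  · rw [LinearMap.mulLeft_apply, X, monomial_mul, one_mul, hd']
    rfl

end MvPolynomial

section GradedModule

variable {σ R M : Type*} [CommSemiring R] [AddCommMonoid M] [Module R M]
  [Module (MvPolynomial σ R) M] (ℳ : ℕ → Submodule R M)
  [SetLike.GradedSMul (homogeneousSubmodule σ R) ℳ]

theorem smul_mem_graded {i j : ℕ} {b : MvPolynomial σ R} (hb : b.IsHomogeneous i) {x : M}
    (hx : x ∈ ℳ j) : b • x ∈ ℳ (i + j) :=
  SetLike.GradedSMul.smul_mem (A := homogeneousSubmodule σ R) hb hx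

theorem coe_decompose_smul_of_mem_zero [DirectSum.Decomposition ℳ] (n : ℕ)
    (b : MvPolynomial σ R) {m : M} (hm : m ∈ ℳ 0) :
    (DirectSum.decompose ℳ (b • m) n : M) = homogeneousComponent n b • m := by
  have hmem (i : ℕ) : homogeneousComponent i b • m ∈ ℳ i :=
    smul_mem_graded ℳ (homogeneousComponent_isHomogeneous i b) hm
  conv_lhs => rw [← b.sum_homogeneousComponent, Finset.sum_smul, DirectSum.decompose_sum,
    DFinsupp.finsetSum_apply, AddSubmonoidClass.coe_finsetSum]
  rw [Finset.sum_eq_single n (fun i _ hin => DirectSum.decompose_of_mem_ne ℳ (hmem i) hin),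
    DirectSum.decompose_of_mem_same ℳ (hmem n)]
  intro hn
  rw [DirectSum.decompose_of_mem_same ℳ (hmem n),
    homogeneousComponent_eq_zero _ _ (by simpa using hn), zero_smul]

variable [IsScalarTower R (MvPolynomial σ R) M]

variable (σ) in
noncomputable def smulX (i : σ) (k : ℕ) : ℳ k →ₗ[R] ℳ (k + 1) :=
  (Algebra.lsmul R R M (X i : MvPolynomial σ R)).restrict fun _ hx => by
    rw [add_comm]; exact smul_mem_graded ℳ (isHomogeneous_X R i) hx

theorem le_iSup_map_lsmul_X [DirectSum.Decomposition ℳ]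
    (hgen : Submodule.span (MvPolynomial σ R) (ℳ 0 : Set M) = ⊤) (n : ℕ) :
    ℳ (n + 1) ≤ ⨆ i, (ℳ n).map (Algebra.lsmul R R M (X i : MvPolynomial σ R)) := by
  intro v hv
  obtain ⟨N, f, g, rfl⟩ := Submodule.mem_span_set'.mp (hgen.ge (Submodule.mem_top (x := v)))
  rw [← DirectSum.decompose_of_mem_same ℳ hv, DirectSum.decompose_sum,
    DFinsupp.finsetSum_apply, AddSubmonoidClass.coe_finsetSum]
  refine Submodule.sum_mem _ fun j _ => ?_
  rw [coe_decompose_smul_of_mem_zero ℳ _ _ (g j).2]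
  have hb := homogeneousSubmodule_succ_le_iSup_map_mulLeft_X σ R n
    (homogeneousComponent_isHomogeneous (n + 1) (f j))
  generalize homogeneousComponent (n + 1) (f j) = b at hb ⊢
  induction hb using Submodule.iSup_induction' with
  | mem i b hb =>
    obtain ⟨p, hp, rfl⟩ := hb
    refine Submodule.mem_iSup_of_mem i ⟨p • (g j : M), smul_mem_graded ℳ hp (g j).2, ?_⟩
    rw [Algebra.lsmul_apply, LinearMap.mulLeft_apply, mul_smul]
  | zero => rw [zero_smul]; exact zero_mem _
  | add b₁ b₂ _ _ h₁ h₂ => rw [add_smul]; exact add_mem h₁ h₂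

end GradedModule

theorem LinearMap.finrank_add_finrank_le_of_comp_eq_zero {K U V W : Type*} [DivisionRing K]
    [AddCommGroup U] [Module K U] [AddCommGroup V] [Module K V] [AddCommGroup W] [Module K W]
    [FiniteDimensional K V] {f : U →ₗ[K] V} {g : V →ₗ[K] W} (hf : Function.Injective f)
    (hg : Function.Surjective g) (hgf : g ∘ₗ f = 0) :
    Module.finrank K W + Module.finrank K U ≤ Module.finrank K V := by
  rw [← g.finrank_range_add_finrank_ker, range_eq_top.mpr hg, finrank_top,
    ← finrank_range_of_inj hf]
  exact Nat.add_le_add_left (Submodule.finrank_mono (range_le_ker_iff.mpr hgf)) _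

section Koszul

variable {R M : Type*} [CommRing R] [AddCommGroup M] [Module R M]
  [Module (MvPolynomial (Fin 2) R) M] [IsScalarTower R (MvPolynomial (Fin 2) R) M]
  (ℳ : ℕ → Submodule R M) [SetLike.GradedSMul (homogeneousSubmodule (Fin 2) R) ℳ]

-- The degree-`k` parts of the differentials `M(-2) → M(-1)² → M` of the Koszul complex of
-- `X 0, X 1`.
noncomputable def koszulD₂ (k : ℕ) : ℳ k →ₗ[R] ℳ (k + 1) × ℳ (k + 1) :=
  (smulX (Fin 2) ℳ 1 k).prod (-smulX (Fin 2) ℳ 0 k)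

noncomputable def koszulD₁ (k : ℕ) : ℳ k × ℳ k →ₗ[R] ℳ (k + 1) :=
  (smulX (Fin 2) ℳ 0 k).coprod (smulX (Fin 2) ℳ 1 k)

theorem koszulD₁_comp_koszulD₂ (k : ℕ) : koszulD₁ ℳ (k + 1) ∘ₗ koszulD₂ ℳ k = 0 := by
  ext a
  simp [koszulD₁, koszulD₂, smulX, smul_smul, mul_comm]

theorem koszulD₂_injective (hX : IsSMulRegular M (X 1 : MvPolynomial (Fin 2) R)) (k : ℕ) :
    Function.Injective (koszulD₂ ℳ k) := fun _ _ hab =>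
  Subtype.ext (hX (congrArg (fun p => (p.1 : M)) hab))

theorem koszulD₁_surjective [DirectSum.Decomposition ℳ]
    (hgen : Submodule.span (MvPolynomial (Fin 2) R) (ℳ 0 : Set M) = ⊤) (k : ℕ) :
    Function.Surjective (koszulD₁ ℳ k) := by
  intro w
  have hw : (w : M) ∈ (ℳ k).map (Algebra.lsmul R R M (X 0 : MvPolynomial (Fin 2) R)) ⊔
      (ℳ k).map (Algebra.lsmul R R M (X 1 : MvPolynomial (Fin 2) R)) :=
    (le_iSup_map_lsmul_X ℳ hgen k).trans
      (iSup_le fun i => by fin_cases i; exacts [le_sup_left, le_sup_right]) w.2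
  obtain ⟨_, ⟨a, ha, rfl⟩, _, ⟨b, hb, rfl⟩, hab⟩ := Submodule.mem_sup.mp hw
  exact ⟨(⟨a, ha⟩, ⟨b, hb⟩), Subtype.ext hab⟩

end Koszul

theorem finrank_add_finrank_le_two_mul_finrank {K M : Type*} [Field K] [AddCommGroup M]
    [Module K M] [Module (MvPolynomial (Fin 2) K) M] [IsScalarTower K (MvPolynomial (Fin 2) K) M]
    (ℳ : ℕ → Submodule K M) [DirectSum.Decomposition ℳ]
    [SetLike.GradedSMul (homogeneousSubmodule (Fin 2) K) ℳ]
    (hX : IsSMulRegular M (X 1 : MvPolynomial (Fin 2) K))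
    (hgen : Submodule.span (MvPolynomial (Fin 2) K) (ℳ 0 : Set M) = ⊤)
    (k : ℕ) [FiniteDimensional K (ℳ (k + 1))] :
    Module.finrank K (ℳ (k + 2)) + Module.finrank K (ℳ k) ≤ 2 * Module.finrank K (ℳ (k + 1)) := by
  have := LinearMap.finrank_add_finrank_le_of_comp_eq_zero (koszulD₂_injective ℳ hX k)
    (koszulD₁_surjective ℳ hgen (k + 1)) (koszulD₁_comp_koszulD₂ ℳ k)
  rwa [Module.finrank_prod, ← two_mul] at this

theorem add_le_apply_succ_of_concave_of_eventually_linear {f : ℕ → ℕ} {c m K : ℕ}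
    (hconc : ∀ k, f (k + 2) + f k ≤ 2 * f (k + 1)) (hlin : ∀ k, K ≤ k → f k = c + m * k)
    (k : ℕ) : f k + m ≤ f (k + 1) := by
  have hdiff (n : ℕ) : f k + f (k + 1 + n) ≤ f (k + 1) + f (k + n) := by
    induction n with
    | zero => rw [add_zero, add_zero, add_comm]
    | succ n ih => grind [hconc (k + n)]
  have := hdiff K
  rw [hlin (k + 1 + K) (by omega), hlin (k + K) (by omega), mul_add, mul_add, mul_add,
    mul_one] at this
  omega

/-- **Hilbert-function monotonicity for torsion-free graded `ℂ[x,y]`-modules.**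
Let `B = ℂ[x,y]` (with its standard grading by the homogeneous pieces
`homogeneousSubmodule (Fin 2) ℂ i`) and let `M` be a torsion-free graded `B`-module
(grading `ℳ k`, an internal direct sum of `ℂ`-subspaces, compatible with the grading
of `B`), generated by its degree-`0` part, with `M` eventually of rank `7`, i.e.
`dim_ℂ (ℳ k) = c + 7k` for all `k ≥ K`.  Then the successive differences
`d k = dim ℳ (k+1) − dim ℳ k` are decreasing in `k ≥ 0` (stated subtraction-free as
`dim ℳ (k+2) + dim ℳ k ≤ 2 · dim ℳ (k+1)`), and `d k ≥ 7` for all `k ≥ 0`;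
consequently `dim ℳ k ≥ dim ℳ 0 + 7k` for all `k ≥ 0`. -/
theorem stmt8 (M : Type*) [AddCommGroup M] [Module ℂ M]
    [Module (MvPolynomial (Fin 2) ℂ) M] [IsScalarTower ℂ (MvPolynomial (Fin 2) ℂ) M]
    (ℳ : ℕ → Submodule ℂ M)
    (hdirect : DirectSum.IsInternal ℳ)
    (hcompat : ∀ (i j : ℕ) (b : MvPolynomial (Fin 2) ℂ) (x : M),
      b ∈ homogeneousSubmodule (Fin 2) ℂ i → x ∈ ℳ j → b • x ∈ ℳ (i + j))
    (htorsionfree : ∀ (b : MvPolynomial (Fin 2) ℂ) (x : M), b • x = 0 → b = 0 ∨ x = 0)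
    (hgen : Submodule.span (MvPolynomial (Fin 2) ℂ) (ℳ 0 : Set M) = ⊤)
    (hfd : ∀ k, FiniteDimensional ℂ (ℳ k))
    (c K : ℕ) (hK : ∀ k, K ≤ k → Module.finrank ℂ (ℳ k) = c + 7 * k) :
    (∀ k : ℕ, Module.finrank ℂ (ℳ (k + 2)) + Module.finrank ℂ (ℳ k)
        ≤ 2 * Module.finrank ℂ (ℳ (k + 1)))
    ∧ (∀ k : ℕ, Module.finrank ℂ (ℳ k) + 7 ≤ Module.finrank ℂ (ℳ (k + 1)))
    ∧ (∀ k : ℕ, Module.finrank ℂ (ℳ 0) + 7 * k ≤ Module.finrank ℂ (ℳ k)) := by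
  let _ : DirectSum.Decomposition ℳ := hdirect.chooseDecomposition
  have _ : SetLike.GradedSMul (homogeneousSubmodule (Fin 2) ℂ) ℳ :=
    ⟨fun i j _ _ => hcompat i j _ _⟩
  have hX : IsSMulRegular M (X 1 : MvPolynomial (Fin 2) ℂ) :=
    .of_right_eq_zero_of_smul fun x hx => (htorsionfree _ x hx).resolve_left (X_ne_zero 1)
  have hconc (k : ℕ) := finrank_add_finrank_le_two_mul_finrank ℳ hX hgen k
  have hstep := add_le_apply_succ_of_concave_of_eventually_linear hconc hK
  refine ⟨hconc, hstep, fun k => ?_⟩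
  induction k with
  | zero => simp
  | succ k ih => have := hstep k; omega
end

section
/- Let n ≥ 1 and let A = ℂ[x,y,z,w] be graded with weights (1,1,2n,3n). Let Ã be the ℂ[x,y]-submodule of A generated by A_{≤6n} (elements of degree at most 6n). Then Ã is a free ℂ[x,y]-module of rank 7, and dim_ℂ Ã_{6n+k} = dim_ℂ A_{6n} + 7k for all k ≥ 0. -/
open MvPolynomial

noncomputable section

/-- `B = ℂ[x,y]`. -/
abbrev B : Type := MvPolynomial (Fin 2) ℂ

/-- `A = ℂ[x,y,z,w]` (the weights `(1,1,2n,3n)` are recorded by `wt` below). -/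
abbrev A : Type := MvPolynomial (Fin 4) ℂ

/-- The inclusion `B = ℂ[x,y] ↪ A = ℂ[x,y,z,w]`. -/
def incl : B →+* A :=
  (rename (Fin.castLE (by norm_num : 2 ≤ 4))).toRingHom

/-- `A` as a `B`-algebra via the inclusion `ℂ[x,y] ↪ ℂ[x,y,z,w]`. -/
instance : Algebra B A := incl.toAlgebra

instance : IsScalarTower ℂ B A :=
  IsScalarTower.of_algebraMap_eq fun c => by
    simp [RingHom.algebraMap_toAlgebra, incl, MvPolynomial.algebraMap_eq, rename_C]

/-- The weights `wt(x) = wt(y) = 1`, `wt(z) = 2n`, `wt(w) = 3n` on `A`. -/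
def wt (n : ℕ) : Fin 4 → ℕ := ![1, 1, 2 * n, 3 * n]

/-!
Over `B = ℂ[x,y]` the ring `A` is the polynomial ring `B[z,w]`. For `n ≥ 1` a monomial
`x^a y^b z^c w^d` has weight `≤ 6n` only if `2c + 3d ≤ 6`, so `Ã` is the `B`-span of the seven
monomials `z^c w^d` with `2c + 3d ≤ 6`; these are `B`-linearly independent, being distinct
monomials of `B[z,w]`.

As a `ℂ`-space `Ã` is spanned by the monomials `x^a y^b z^c w^d` with `2c + 3d ≤ 6`. In weight
`m ≥ 6n` each of the seven pairs `(c, d)` contributes the `m - 2nc - 3nd + 1` solutions of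
`a + b = m - 2nc - 3nd`, so the dimension grows by exactly `7` from `m` to `m + 1`. Finally every
monomial of weight `6n` already satisfies `2c + 3d ≤ 6`, so `Ã₍₆ₙ₎ = A₍₆ₙ₎`.
-/

open Finset

section General

variable {σ R : Type*} [CommSemiring R]

lemma restrictSupport_inter (s t : Set (σ →₀ ℕ)) :
    restrictSupport R (s ∩ t) = restrictSupport R s ⊓ restrictSupport R t := by
  ext p
  simp only [Submodule.mem_inf, mem_restrictSupport_iff, Set.subset_inter_iff]

lemma weightedHomogeneousSubmodule_eq_restrictSupport {M : Type*} [AddCommMonoid M] (w : σ → M)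
    (m : M) :
    weightedHomogeneousSubmodule R w m = restrictSupport R {d | Finsupp.weight w d = m} :=
  weightedHomogeneousSubmodule_eq_finsupp_supported R w m

lemma weightedTotalDegree_monomial_le (w : σ → ℕ) (s : σ →₀ ℕ) (r : R) :
    weightedTotalDegree w (monomial s r) ≤ Finsupp.weight w s :=
  Finset.sup_le fun d hd => by rw [Finset.mem_singleton.1 (support_monomial_subset hd)]

lemma finrank_restrictSupport {K : Type*} [Field K] (s : Finset (σ →₀ ℕ)) :
    Module.finrank K (restrictSupport K (s : Set (σ →₀ ℕ))) = s.card := by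
  rw [Module.finrank_eq_card_basis (basisRestrictSupport K _)]
  simp

lemma linearIndependent_X_pow_mul_X_pow :
    LinearIndependent R fun p : ℕ × ℕ => (X 0 ^ p.1 * X 1 ^ p.2 : MvPolynomial (Fin 2) R) := by
  have hinj : Function.Injective
      fun p : ℕ × ℕ => Finsupp.single (0 : Fin 2) p.1 + Finsupp.single 1 p.2 := by
    intro p q h
    have h0 := DFunLike.congr_fun h 0
    have h1 := DFunLike.congr_fun h 1
    simp only [Finsupp.add_apply, Finsupp.single_apply] at h0 h1
    exact Prod.ext (by simpa using h0) (by simpa using h1)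
  convert (basisMonomials (Fin 2) R).linearIndependent.comp _ hinj with p
  simp [X_pow_eq_monomial, monomial_mul]

lemma monomial_eq_C_mul_X_pow (s : Fin 4 →₀ ℕ) (r : R) :
    monomial s r = C r * X 0 ^ s 0 * X 1 ^ s 1 * X 2 ^ s 2 * X 3 ^ s 3 := by
  rw [monomial_eq, Finsupp.prod_fintype _ _ (by simp), Fin.prod_univ_four]
  ring

end General

lemma weight_wt (n : ℕ) (s : Fin 4 →₀ ℕ) :
    Finsupp.weight (wt n) s = s 0 + s 1 + 2 * n * s 2 + 3 * n * s 3 := by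
  rw [Finsupp.weight_apply, Finsupp.sum_fintype _ _ (by simp)]
  simp only [wt, smul_eq_mul, Fin.sum_univ_four, Matrix.cons_val_zero, Matrix.cons_val_one,
    Matrix.cons_val, mul_one]
  ring

/-- `x, y` go to the coefficients and `z, w` to the variables of `B[z,w]`. -/
def toPolyOverB : A →ₐ[ℂ] MvPolynomial (Fin 2) B :=
  aeval ![C (X 0), C (X 1), X 0, X 1]

lemma toPolyOverB_incl (p : B) : toPolyOverB (incl p) = C p := by
  have h : toPolyOverB.comp (rename (Fin.castLE (by norm_num : 2 ≤ 4))) =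
      IsScalarTower.toAlgHom ℂ B (MvPolynomial (Fin 2) B) := by
    ext i
    fin_cases i <;> simp [toPolyOverB]
  exact congr($h p)

def toPolyOverBₗ : A →ₗ[B] MvPolynomial (Fin 2) B where
  toFun := toPolyOverB
  map_add' := map_add _
  map_smul' p q := by
    rw [Algebra.smul_def, RingHom.id_apply, smul_eq_C_mul, map_mul, ← toPolyOverB_incl]
    rfl

def zwMonomial (p : ℕ × ℕ) : A := X 2 ^ p.1 * X 3 ^ p.2

lemma zwMonomial_eq_monomial (p : ℕ × ℕ) :
    zwMonomial p = monomial (Finsupp.single 2 p.1 + Finsupp.single 3 p.2) 1 := by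
  simp [zwMonomial, X_pow_eq_monomial, monomial_mul]

lemma linearIndependent_zwMonomial : LinearIndependent B zwMonomial := by
  refine LinearIndependent.of_comp toPolyOverBₗ ?_
  have h : toPolyOverBₗ ∘ zwMonomial =
      fun p : ℕ × ℕ => (X 0 ^ p.1 * X 1 ^ p.2 : MvPolynomial (Fin 2) B) := by
    funext p
    simp [zwMonomial, toPolyOverBₗ, toPolyOverB]
  rw [h]
  exact linearIndependent_X_pow_mul_X_pow

def zwExponents : Finset (ℕ × ℕ) :=
  (range 4 ×ˢ range 3).filter fun p => 2 * p.1 + 3 * p.2 ≤ 6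

lemma mem_zwExponents {p : ℕ × ℕ} : p ∈ zwExponents ↔ 2 * p.1 + 3 * p.2 ≤ 6 := by
  simp only [zwExponents, mem_filter, mem_product, mem_range]
  omega

lemma card_zwExponents : zwExponents.card = 7 := by
  decide

def zwWeight (n : ℕ) (p : ℕ × ℕ) : ℕ := 2 * n * p.1 + 3 * n * p.2

lemma zwWeight_le {n : ℕ} {p : ℕ × ℕ} (hp : p ∈ zwExponents) : zwWeight n p ≤ 6 * n := by
  have := mem_zwExponents.1 hp
  rw [zwWeight]
  nlinarith

def zwBounded : Set (Fin 4 →₀ ℕ) := {s | 2 * s 2 + 3 * s 3 ≤ 6}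

lemma mem_zwBounded_of_weight_le {n : ℕ} (hn : 1 ≤ n) {s : Fin 4 →₀ ℕ}
    (hs : Finsupp.weight (wt n) s ≤ 6 * n) : s ∈ zwBounded := by
  rw [weight_wt] at hs
  have h : n * (2 * s 2 + 3 * s 3) ≤ n * 6 := by nlinarith
  exact Nat.le_of_mul_le_mul_left h hn

lemma monomial_mem_span_zwMonomial {s : Fin 4 →₀ ℕ} (hs : s ∈ zwBounded) (r : ℂ) :
    monomial s r ∈ Submodule.span B (zwMonomial '' zwExponents) := by
  have h : (monomial s r : A) = (C r * X 0 ^ s 0 * X 1 ^ s 1 : B) • zwMonomial (s 2, s 3) := by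
    simp only [monomial_eq_C_mul_X_pow s r, zwMonomial, Algebra.smul_def,
      RingHom.algebraMap_toAlgebra, incl, AlgHom.toRingHom_eq_coe, RingHom.coe_coe, map_mul,
      algHom_C, algebraMap_eq, map_pow, rename_X, Fin.castLE_zero, Fin.reduceCastLE]
    ring
  rw [h]
  exact Submodule.smul_mem _ _ (Submodule.subset_span ⟨(s 2, s 3), mem_zwExponents.2 hs, rfl⟩)

lemma span_weightedTotalDegree_le_eq {n : ℕ} (hn : 1 ≤ n) :
    Submodule.span B {g : A | weightedTotalDegree (wt n) g ≤ 6 * n} =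
      Submodule.span B (zwMonomial '' zwExponents) := by
  apply le_antisymm <;> rw [Submodule.span_le]
  · intro g hg
    rw [SetLike.mem_coe, ← support_sum_monomial_coeff g]
    exact Submodule.sum_mem _ fun s hs => monomial_mem_span_zwMonomial
      (mem_zwBounded_of_weight_le hn ((le_weightedTotalDegree _ hs).trans hg)) _
  · rintro _ ⟨p, hp, rfl⟩
    refine Submodule.subset_span ((zwMonomial_eq_monomial p ▸
      weightedTotalDegree_monomial_le _ _ _).trans ?_)
    have := zwWeight_le (n := n) hp
    simp only [weight_wt, zwWeight, Finsupp.coe_add, Pi.add_apply, Finsupp.single_apply] at *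
    simpa using this

def zwBasis : Module.Basis zwExponents B (Submodule.span B (zwMonomial '' zwExponents)) :=
  (Module.Basis.span (linearIndependent_zwMonomial.comp _ Subtype.val_injective)).map
    (LinearEquiv.ofEq _ _ (by rw [Set.range_comp, Subtype.range_coe]))

open scoped Pointwise in
lemma smul_mem_restrictSupport_zwBounded (p : B) {q : A}
    (hq : q ∈ restrictSupport ℂ zwBounded) : p • q ∈ restrictSupport ℂ zwBounded := by
  have hincl : incl p ∈ restrictSupport ℂ {s : Fin 4 →₀ ℕ | s 2 = 0 ∧ s 3 = 0} := by
    classical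
    rw [mem_restrictSupport_iff, incl, AlgHom.toRingHom_eq_coe, RingHom.coe_coe,
      support_rename_of_injective (Fin.castLE_injective _), coe_image]
    rintro _ ⟨t, -, rfl⟩
    constructor <;> exact Finsupp.mapDomain_of_notMem_range _ _ (by simp)
  have hsub : {s : Fin 4 →₀ ℕ | s 2 = 0 ∧ s 3 = 0} + zwBounded ⊆ zwBounded := by
    rintro _ ⟨s, ⟨hs2, hs3⟩, t, ht, rfl⟩
    simpa [zwBounded, hs2, hs3] using ht
  rw [Algebra.smul_def]
  exact restrictSupport_mono ℂ hsub
    (restrictSupport_add ℂ _ _ ▸ Submodule.mul_mem_mul hincl hq)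

lemma restrictScalars_span_zwMonomial :
    (Submodule.span B (zwMonomial '' zwExponents)).restrictScalars ℂ =
      restrictSupport ℂ zwBounded := by
  apply le_antisymm
  · intro q hq
    induction hq using Submodule.span_induction with
    | mem _ hq =>
      obtain ⟨p, hp, rfl⟩ := hq
      rw [zwMonomial_eq_monomial, monomial_mem_restrictSupport]
      left
      simpa [zwBounded] using mem_zwExponents.1 hp
    | zero => exact zero_mem _
    | add _ _ _ _ hx hy => exact add_mem hx hy
    | smul p _ _ hq => exact smul_mem_restrictSupport_zwBounded p hq
  · rw [restrictSupport_eq_span, Submodule.span_le]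
    rintro _ ⟨s, hs, rfl⟩
    exact monomial_mem_span_zwMonomial hs 1

def exponent (a b c d : ℕ) : Fin 4 →₀ ℕ := Finsupp.equivFunOnFinite.symm ![a, b, c, d]

lemma exponent_eq_self (s : Fin 4 →₀ ℕ) : exponent (s 0) (s 1) (s 2) (s 3) = s := by
  ext i
  fin_cases i <;> rfl

def zwBoundedOfWeight (n m : ℕ) : Finset (Fin 4 →₀ ℕ) :=
  (zwExponents.sigma fun p => antidiagonal (m - zwWeight n p)).image
    fun x => exponent x.2.1 x.2.2 x.1.1 x.1.2

lemma coe_zwBoundedOfWeight {n m : ℕ} (hm : 6 * n ≤ m) :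
    (zwBoundedOfWeight n m : Set (Fin 4 →₀ ℕ)) =
      zwBounded ∩ {s | Finsupp.weight (wt n) s = m} := by
  ext s
  simp only [zwBoundedOfWeight, coe_image, Set.mem_image, mem_coe, mem_sigma,
    HasAntidiagonal.mem_antidiagonal, Set.mem_inter_iff, Set.mem_ofPred_eq, weight_wt, zwBounded]
  constructor
  · rintro ⟨⟨p, a, b⟩, ⟨hp, hab⟩, rfl⟩
    have := zwWeight_le (n := n) hp
    simp only [exponent, Finsupp.coe_equivFunOnFinite_symm, Matrix.cons_val, Matrix.cons_val_zero,
      Matrix.cons_val_one]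
    exact ⟨mem_zwExponents.1 hp, by simp only [zwWeight] at *; omega⟩
  · rintro ⟨hs, hw⟩
    refine ⟨⟨(s 2, s 3), s 0, s 1⟩, ⟨mem_zwExponents.2 hs, ?_⟩, exponent_eq_self s⟩
    simp only [zwWeight]
    omega

lemma card_zwBoundedOfWeight (n m : ℕ) :
    (zwBoundedOfWeight n m).card = ∑ p ∈ zwExponents, (m - zwWeight n p + 1) := by
  rw [zwBoundedOfWeight, card_image_of_injective, card_sigma]
  · simp only [Nat.card_antidiagonal]
  · rintro ⟨⟨c, d⟩, a, b⟩ ⟨⟨c', d'⟩, a', b'⟩ h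
    have h0 := DFunLike.congr_fun h 0
    have h1 := DFunLike.congr_fun h 1
    have h2 := DFunLike.congr_fun h 2
    have h3 := DFunLike.congr_fun h 3
    simp only [exponent, Finsupp.equivFunOnFinite_symm_apply_apply, Matrix.cons_val_zero,
      Matrix.cons_val_one, Matrix.cons_val] at h0 h1 h2 h3
    subst h0 h1 h2 h3
    rfl

lemma finrank_span_zwMonomial_inf_weightedHomogeneousSubmodule {n m : ℕ} (hm : 6 * n ≤ m) :
    Module.finrank ℂ ↥((Submodule.span B (zwMonomial '' zwExponents)).restrictScalars ℂ ⊓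
        weightedHomogeneousSubmodule ℂ (wt n) m) =
      ∑ p ∈ zwExponents, (m - zwWeight n p + 1) := by
  rw [restrictScalars_span_zwMonomial, weightedHomogeneousSubmodule_eq_restrictSupport,
    ← restrictSupport_inter, ← coe_zwBoundedOfWeight hm, finrank_restrictSupport,
    card_zwBoundedOfWeight]

lemma weightedHomogeneousSubmodule_le_span_zwMonomial {n : ℕ} (hn : 1 ≤ n) :
    weightedHomogeneousSubmodule ℂ (wt n) (6 * n) ≤
      (Submodule.span B (zwMonomial '' zwExponents)).restrictScalars ℂ := by
  rw [restrictScalars_span_zwMonomial, weightedHomogeneousSubmodule_eq_restrictSupport]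
  exact restrictSupport_mono ℂ fun s hs => mem_zwBounded_of_weight_le hn (le_of_eq hs)

/-- **The `B`-module `Ã` is free of rank `7`.**
Let `A = ℂ[x,y,z,w]` be graded with weights `(1,1,2n,3n)` and let `Ã` be the
`ℂ[x,y]`-submodule of `A` generated by the elements of weighted degree at most `6n`.
Then `Ã` is a free `ℂ[x,y]`-module of rank `7`, and for all `k ≥ 0`
`dim_ℂ Ã₍₆ₙ₊ₖ₎ = dim_ℂ A₍₆ₙ₎ + 7k`, where `Ã₍d₎` (resp. `A₍d₎`) denotes the
subspace of weighted-homogeneous elements of degree `d` of `Ã` (resp. `A`). -/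
theorem stmt9 (n : ℕ) (hn : 1 ≤ n)
    (At : Submodule B A)
    (hAt : At = Submodule.span B {g : A | weightedTotalDegree (wt n) g ≤ 6 * n}) :
    Module.Free B ↥At ∧ Module.rank B ↥At = 7 ∧
      ∀ k : ℕ,
        Module.finrank ℂ
            ↥(At.restrictScalars ℂ ⊓ weightedHomogeneousSubmodule ℂ (wt n) (6 * n + k))
          = Module.finrank ℂ ↥(weightedHomogeneousSubmodule ℂ (wt n) (6 * n)) + 7 * k := by
  subst hAt
  rw [span_weightedTotalDegree_le_eq hn]
  refine ⟨.of_basis zwBasis, ?_, fun k => ?_⟩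
  · rw [rank_eq_card_basis zwBasis, Fintype.card_coe, card_zwExponents, Nat.cast_ofNat]
  rw [← inf_eq_right.2 (weightedHomogeneousSubmodule_le_span_zwMonomial hn),
    finrank_span_zwMonomial_inf_weightedHomogeneousSubmodule (Nat.le_add_right _ k),
    finrank_span_zwMonomial_inf_weightedHomogeneousSubmodule le_rfl]
  calc ∑ p ∈ zwExponents, (6 * n + k - zwWeight n p + 1)
      = ∑ p ∈ zwExponents, ((6 * n - zwWeight n p + 1) + k) :=
        sum_congr rfl fun p hp => by have := zwWeight_le (n := n) hp; omega
    _ = _ := by rw [sum_add_distrib, sum_const, card_zwExponents, smul_eq_mul]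

end
end
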